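/- Let E = {z ∈ ℂ : |z| ≤ 1} be the closed unit disk and Γ = {z : |z − 1| = R} with R > 2, so that E lies inside the disk bounded by Γ. Then for each n, the monomial p(z) = z^n satisfies ||p||_E / ||p||_Γ = 1/(R+1)^n, and lim_{n→∞} (inf_{p ∈ P_n, p ≠ 0} ||p||_E / ||p||_Γ)^{1/n} = 1/(R+1). -/

import Mathlib

open Polynomial Filter

/-- Sup norm of a polynomial on a set `K`. -/
noncomputable def polySupNorm (K : Set ℂ) (p : Polynomial ℂ) : ℝ :=
  sSup ((fun z => ‖p.eval z‖) '' K)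

open Metric Topology

/-! On the unit disk `z ^ n` has norm `1`, and on `Γ` it attains its maximum `(R + 1) ^ n` at
the point `R + 1` farthest from the origin. Conversely, Cauchy's estimate bounds every coefficient
of `p` by `‖p‖_E`, so `|p z| ≤ (n + 1) (R + 1) ^ n ‖p‖_E` on `Γ` when `deg p ≤ n`. The infimum is
therefore squeezed between `(R + 1) ^ (-n) / (n + 1)` and `(R + 1) ^ (-n)`, and
`(n + 1) ^ (1 / n) → 1`. -/

theorem norm_eval_le_polySupNorm {K : Set ℂ} (hK : IsCompact K) (p : ℂ[X]) {z : ℂ}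
    (hz : z ∈ K) : ‖p.eval z‖ ≤ polySupNorm K p :=
  le_csSup (hK.image (continuous_norm.comp p.continuous)).bddAbove ⟨z, hz, rfl⟩

theorem polySupNorm_nonneg (K : Set ℂ) (p : ℂ[X]) : 0 ≤ polySupNorm K p :=
  Real.sSup_nonneg (by rintro _ ⟨z, -, rfl⟩; exact norm_nonneg _)

theorem polySupNorm_le {K : Set ℂ} {p : ℂ[X]} {C : ℝ} (hC : 0 ≤ C)
    (h : ∀ z ∈ K, ‖p.eval z‖ ≤ C) : polySupNorm K p ≤ C :=
  Real.sSup_le (by rintro _ ⟨z, hz, rfl⟩; exact h z hz) hC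

theorem polySupNorm_pos {K : Set ℂ} {p : ℂ[X]} (hK : IsCompact K) (hK' : K.Infinite)
    (hp : p ≠ 0) : 0 < polySupNorm K p := by
  obtain ⟨z, hzK, hz⟩ := (hK'.sdiff (p.finite_setOfPred_isRoot hp)).nonempty
  exact (norm_pos_iff.2 hz).trans_le (norm_eval_le_polySupNorm hK p hzK)

theorem polySupNorm_X_pow {K : Set ℂ} {z₀ : ℂ} (hz₀ : z₀ ∈ K) (h : ∀ z ∈ K, ‖z‖ ≤ ‖z₀‖)
    (n : ℕ) : polySupNorm K (X ^ n) = ‖z₀‖ ^ n := by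
  refine IsGreatest.csSup_eq ⟨⟨z₀, hz₀, by simp⟩, ?_⟩
  rintro _ ⟨z, hz, rfl⟩
  simpa using pow_le_pow_left₀ (norm_nonneg z) (h z hz) n

theorem sphere_infinite (c : ℂ) {r : ℝ} (hr : 0 < r) : (sphere c r).Infinite := by
  refine (isPreconnected_sphere (by simp [Complex.rank_real_complex]) c r).infinite_of_nontrivial
    ⟨c + r, ?_, c - r, ?_, ?_⟩
  · simp [abs_of_pos hr]
  · simp [abs_of_pos hr]
  · simpa [sub_eq_add_neg, eq_neg_iff_add_eq_zero, ← two_mul] using hr.ne'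

namespace Polynomial

theorem iterate_deriv_eval {𝕜 : Type*} [NontriviallyNormedField 𝕜] (p : 𝕜[X]) (k : ℕ) :
    deriv^[k] (fun x => p.eval x) = fun x => (derivative^[k] p).eval x := by
  induction k generalizing p with
  | zero => rfl
  | succ k ih =>
    rw [Function.iterate_succ_apply, Function.iterate_succ_apply, ← ih]
    congr 1
    exact _root_.funext fun x => p.deriv

theorem iteratedDeriv_eval_zero {𝕜 : Type*} [NontriviallyNormedField 𝕜] (p : 𝕜[X]) (k : ℕ) :
    iteratedDeriv k (fun x => p.eval x) 0 = k.factorial * p.coeff k := by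
  rw [iteratedDeriv_eq_iterate, iterate_deriv_eval]
  dsimp only
  rw [← coeff_zero_eq_eval_zero, coeff_iterate_derivative, zero_add, Nat.descFactorial_self,
    nsmul_eq_mul]

end Polynomial

theorem norm_coeff_mul_pow_le_polySupNorm (p : ℂ[X]) (k : ℕ) {r : ℝ} (hr : 0 < r) :
    ‖p.coeff k‖ * r ^ k ≤ polySupNorm (closedBall 0 r) p := by
  have hcauchy := Complex.norm_iteratedDeriv_le_of_forall_mem_sphere_norm_le k hr
    p.differentiable.diffContOnCl fun z hz =>
      norm_eval_le_polySupNorm (isCompact_closedBall 0 r) p (sphere_subset_closedBall hz)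
  rw [iteratedDeriv_eval_zero, norm_mul, Complex.norm_natCast, le_div_iff₀ (by positivity),
    mul_assoc, mul_le_mul_iff_right₀ (by positivity)] at hcauchy
  exact hcauchy

theorem norm_eval_le_of_natDegree_le (p : ℂ[X]) {n : ℕ} (hn : p.natDegree ≤ n) {ρ : ℝ}
    (hρ : 1 ≤ ρ) {z : ℂ} (hz : ‖z‖ ≤ ρ) :
    ‖p.eval z‖ ≤ (n + 1) * ρ ^ n * polySupNorm (closedBall 0 1) p := by
  have hcoeff (k : ℕ) : ‖p.coeff k‖ ≤ polySupNorm (closedBall 0 1) p := by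
    simpa using norm_coeff_mul_pow_le_polySupNorm p k one_pos
  calc ‖p.eval z‖
      = ‖∑ k ∈ Finset.range (n + 1), p.coeff k * z ^ k‖ := by
        rw [eval_eq_sum_range' (Nat.lt_succ_of_le hn)]
    _ ≤ ∑ k ∈ Finset.range (n + 1), ‖p.coeff k‖ * ‖z‖ ^ k := by
        simpa only [norm_mul, norm_pow] using
          norm_sum_le (Finset.range (n + 1)) fun k => p.coeff k * z ^ k
    _ ≤ ∑ _k ∈ Finset.range (n + 1), polySupNorm (closedBall 0 1) p * ρ ^ n := by
        gcongr with k hk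
        · exact polySupNorm_nonneg _ p
        · exact hcoeff k
        · exact (pow_le_pow_left₀ (norm_nonneg z) hz k).trans
            (pow_le_pow_right₀ hρ (Finset.mem_range_succ_iff.1 hk))
    _ = (n + 1) * ρ ^ n * polySupNorm (closedBall 0 1) p := by
        rw [Finset.sum_const, Finset.card_range, nsmul_eq_mul]
        push_cast
        ring

theorem pow_div_le_polySupNorm_div {K : Set ℂ} (hK : IsCompact K) (hK' : K.Infinite) {ρ : ℝ}
    (hρ : 1 ≤ ρ) (hKρ : ∀ z ∈ K, ‖z‖ ≤ ρ) {p : ℂ[X]} (hp : p ≠ 0) {n : ℕ}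
    (hn : p.natDegree ≤ n) :
    (1 / ρ) ^ n / (n + 1) ≤ polySupNorm (closedBall 0 1) p / polySupNorm K p := by
  have hρ0 : 0 < ρ := zero_lt_one.trans_le hρ
  have hK_le : polySupNorm K p ≤ (n + 1) * ρ ^ n * polySupNorm (closedBall 0 1) p :=
    polySupNorm_le (mul_nonneg (by positivity) (polySupNorm_nonneg _ p)) fun z hz =>
      norm_eval_le_of_natDegree_le p hn hρ (hKρ z hz)
  rw [one_div_pow, div_div, div_le_div_iff₀ (by positivity) (polySupNorm_pos hK hK' hp)]
  linarith

theorem tendsto_rpow_one_div_of_pow_div_le_of_le_pow {s : ℕ → ℝ} {x : ℝ} (hx : 0 ≤ x)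
    (hlow : ∀ n : ℕ, x ^ n / (n + 1) ≤ s n) (hup : ∀ n : ℕ, s n ≤ x ^ n) :
    Tendsto (fun n : ℕ => s n ^ ((1 : ℝ) / n)) atTop (𝓝 x) := by
  have hroot : ∀ᶠ n : ℕ in atTop, (x ^ n) ^ ((1 : ℝ) / n) = x := by
    filter_upwards [eventually_ne_atTop 0] with n hn
    rw [one_div, Real.pow_rpow_inv_natCast hx hn]
  -- `(n + 1) ^ (1 / n) → 1` is `y ^ (1 / (y - 1)) → 1` at `y = n + 1`
  have hdenom : Tendsto (fun n : ℕ => ((n : ℝ) + 1) ^ ((1 : ℝ) / n)) atTop (𝓝 1) := by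
    have := (tendsto_rpow_div_mul_add 1 1 (-1) zero_ne_one).comp
      (tendsto_atTop_add_const_right atTop 1 tendsto_natCast_atTop_atTop)
    simpa [Function.comp_def] using this
  have hlow' : Tendsto (fun n : ℕ => (x ^ n / (n + 1)) ^ ((1 : ℝ) / n)) atTop (𝓝 x) := by
    have := (tendsto_const_nhds (x := x)).div hdenom one_ne_zero
    rw [div_one] at this
    refine this.congr' ?_
    filter_upwards [hroot] with n hn
    rw [Pi.div_apply, Real.div_rpow (by positivity) (by positivity), hn]
  refine tendsto_of_tendsto_of_tendsto_of_le_of_le' hlow'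
    (tendsto_const_nhds.congr' (EventuallyEq.symm hroot)) (Eventually.of_forall fun n => ?_)
    (Eventually.of_forall fun n => ?_)
  · exact Real.rpow_le_rpow (by positivity) (hlow n) (by positivity)
  · have hlow_nonneg : 0 ≤ x ^ n / (n + 1) := by positivity
    exact Real.rpow_le_rpow (hlow_nonneg.trans (hlow n)) (hup n) (by positivity)

/-- with `E` the closed unit disk and `Γ` the circle `|z - 1| = R`, `R > 2`,
the monomial `z^n` has norm ratio `1/(R+1)^n`, and the `n`-th root of the infimum of the
ratios over nonzero polynomials of degree at most `n` tends to `1/(R+1)`. -/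
theorem monomial_ratio_and_inf_limit (R : ℝ) (hR : 2 < R)
    (E : Set ℂ) (hEdef : E = Metric.closedBall (0 : ℂ) 1)
    (Γ : Set ℂ) (hΓdef : Γ = Metric.sphere (1 : ℂ) R) :
    (∀ n : ℕ, polySupNorm E (X ^ n) / polySupNorm Γ (X ^ n) = 1 / (R + 1) ^ n) ∧
    Tendsto (fun n : ℕ =>
        (sInf {r : ℝ | ∃ p : Polynomial ℂ, p ≠ 0 ∧ p.natDegree ≤ n ∧
            r = polySupNorm E p / polySupNorm Γ p}) ^ ((1 : ℝ) / n))
      atTop (nhds (1 / (R + 1))) := by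
  subst hEdef hΓdef
  have hRpos : 0 < R := by linarith
  have hΓρ : ∀ z ∈ sphere (1 : ℂ) R, ‖z‖ ≤ R + 1 := fun z hz => by
    linarith [norm_le_norm_add_norm_sub' z 1, mem_sphere_iff_norm.1 hz, norm_one (α := ℂ)]
  have hz₀ : ((R + 1 : ℝ) : ℂ) ∈ sphere (1 : ℂ) R := by simp [abs_of_pos hRpos]
  have hz₀_norm : ‖((R + 1 : ℝ) : ℂ)‖ = R + 1 := Complex.norm_of_nonneg (by linarith)
  have hmonomial (n : ℕ) :
      polySupNorm (closedBall 0 1) (X ^ n) / polySupNorm (sphere 1 R) (X ^ n) =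
        1 / (R + 1) ^ n := by
    rw [polySupNorm_X_pow (by simp : (1 : ℂ) ∈ closedBall 0 1) (fun z hz => by simpa using hz),
      polySupNorm_X_pow hz₀ (fun z hz => (hΓρ z hz).trans_eq hz₀_norm.symm), hz₀_norm,
      norm_one, one_pow]
  have hlow (n : ℕ) (p : ℂ[X]) (hp : p ≠ 0) (hn : p.natDegree ≤ n) :
      (1 / (R + 1)) ^ n / (n + 1) ≤ polySupNorm (closedBall 0 1) p / polySupNorm (sphere 1 R) p :=
    pow_div_le_polySupNorm_div (isCompact_sphere 1 R) (sphere_infinite 1 hRpos) (by linarith)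
      hΓρ hp hn
  have hX (n : ℕ) : (X ^ n : ℂ[X]) ≠ 0 ∧ (X ^ n : ℂ[X]).natDegree ≤ n :=
    ⟨pow_ne_zero n X_ne_zero, by simp⟩
  refine ⟨hmonomial, tendsto_rpow_one_div_of_pow_div_le_of_le_pow (by positivity)
    (fun n => ?_) (fun n => ?_)⟩
  · exact le_csInf ⟨_, X ^ n, (hX n).1, (hX n).2, rfl⟩ fun _ ⟨p, hp, hn, hr⟩ => hr ▸ hlow n p hp hn
  · rw [one_div_pow, ← hmonomial n]
    exact csInf_le ⟨_, fun _ ⟨p, hp, hn, hr⟩ => hr ▸ hlow n p hp hn⟩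
      ⟨X ^ n, (hX n).1, (hX n).2, rfl⟩
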